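/- Let (x_n)_{n=1}^∞ be a non-increasing sequence of non-negative real numbers with Σ_{n=1}^∞ x_n ≤ 1 and Σ_{n=1}^∞ x_n² ≥ δ², where 1 ≥ δ > 1/2. Then x₁ ≥ δ² and x₁ + x₂ ≥ δ. -/

import Mathlib

/-!
Since `xₙ ≤ x₁` for all `n`, the sum of squares is at most `x₁ ∑ xₙ ≤ x₁`, giving `x₁ ≥ δ²`.
Peeling off the first term and bounding the rest by `x₂` in the same way gives
`δ² ≤ x₁² + x₂ (1 - x₁)`. If `x₁ + x₂ < δ`, substituting `x₂ < δ - x₁` turns this into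
`0 ≤ (x₁ - δ)(2x₁ - 1 + δ)`, which is impossible since `x₁ < δ` while
`2x₁ - 1 + δ ≥ 2δ² - 1 + δ = (2δ - 1)(δ + 1) > 0`.
-/

theorem tsum_sq_le_mul_tsum {ι : Type*} {x : ι → ℝ} {c : ℝ} (hpos : ∀ i, 0 ≤ x i)
    (hle : ∀ i, x i ≤ c) (hsum : Summable x) (hsumsq : Summable fun i => x i ^ 2) :
    ∑' i, x i ^ 2 ≤ c * ∑' i, x i := by
  rw [← tsum_mul_left]
  refine hsumsq.tsum_le_tsum (fun i => ?_) (hsum.mul_left c)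
  rw [sq]
  exact mul_le_mul_of_nonneg_right (hle i) (hpos i)

theorem Antitone.tsum_sq_le {x : ℕ → ℝ} (hpos : ∀ n, 0 ≤ x n) (hmono : Antitone x)
    (hsum : Summable x) (hsumsq : Summable fun n => x n ^ 2) :
    ∑' n, x n ^ 2 ≤ x 0 ^ 2 + x 1 * ∑' n, x (n + 1) := by
  rw [hsumsq.tsum_eq_zero_add]
  gcongr
  exact tsum_sq_le_mul_tsum (fun n => hpos _) (fun n => hmono (by omega))
    ((summable_nat_add_iff 1).2 hsum) ((summable_nat_add_iff 1).2 hsumsq)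

theorem le_add_of_sq_le_sq_add_mul_sub {a b δ : ℝ} (hδ : 1 / 2 < δ) (hb : 0 ≤ b) (ha : a ≤ 1)
    (hδa : δ ^ 2 ≤ a) (h : δ ^ 2 ≤ a ^ 2 + b * (1 - a)) : δ ≤ a + b := by
  by_contra! hlt
  have hbound : b * (1 - a) ≤ (δ - a) * (1 - a) :=
    mul_le_mul_of_nonneg_right (by linarith) (by linarith)
  have hfactor_pos : 0 < 2 * a - 1 + δ := by nlinarith
  nlinarith [mul_pos (show 0 < δ - a by linarith) hfactor_pos]

theorem stmt6_general (x : ℕ → ℝ) (δ : ℝ)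
    (hpos : ∀ n, 0 ≤ x n) (hmono : Antitone x)
    (hsum : Summable x) (hsumsq : Summable fun n => x n ^ 2)
    (h1 : ∑' n : ℕ, x n ≤ 1) (h2 : δ ^ 2 ≤ ∑' n : ℕ, x n ^ 2)
    (hδ : 1 / 2 < δ) :
    δ ^ 2 ≤ x 0 ∧ δ ≤ x 0 + x 1 := by
  have hsplit : ∑' n, x n = x 0 + ∑' n, x (n + 1) := hsum.tsum_eq_zero_add
  have htail : 0 ≤ ∑' n, x (n + 1) := tsum_nonneg fun n => hpos _
  have hx0 : δ ^ 2 ≤ x 0 :=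
    calc δ ^ 2 ≤ ∑' n, x n ^ 2 := h2
      _ ≤ x 0 * ∑' n, x n := tsum_sq_le_mul_tsum hpos (fun n => hmono n.zero_le) hsum hsumsq
      _ ≤ x 0 := mul_le_of_le_one_right (hpos 0) h1
  refine ⟨hx0, le_add_of_sq_le_sq_add_mul_sub hδ (hpos 1) (by linarith) hx0 ?_⟩
  calc δ ^ 2 ≤ ∑' n, x n ^ 2 := h2
    _ ≤ x 0 ^ 2 + x 1 * ∑' n, x (n + 1) := hmono.tsum_sq_le hpos hsum hsumsq
    _ ≤ x 0 ^ 2 + x 1 * (1 - x 0) := by gcongr; exacts [hpos 1, by linarith]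

/-- If `(xₙ)` is a non-increasing sequence of non-negative reals with `∑ xₙ ≤ 1` and
`∑ xₙ² ≥ δ²` for some `1 ≥ δ > 1/2`, then `x₁ ≥ δ²` and `x₁ + x₂ ≥ δ`.
(Here the sequence is indexed by `ℕ`, `x 0` playing the role of `x₁`.) -/
theorem stmt6 (x : ℕ → ℝ) (δ : ℝ)
    (hpos : ∀ n, 0 ≤ x n) (hmono : Antitone x)
    (hsum : Summable x) (hsumsq : Summable fun n => x n ^ 2)
    (h1 : ∑' n : ℕ, x n ≤ 1) (h2 : δ ^ 2 ≤ ∑' n : ℕ, x n ^ 2)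
    (hδ1 : δ ≤ 1) (hδ : 1 / 2 < δ) :
    δ ^ 2 ≤ x 0 ∧ δ ≤ x 0 + x 1 :=
  stmt6_general x δ hpos hmono hsum hsumsq h1 h2 hδ
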